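/- arXiv:1204.0366 — 3 statements merged into one kernel-verified Lean document; each statement's English description precedes it below -/
import Mathlib

section
/- For a Bell-diagonal state ρ with ordered eigenvalues λ₁ ≥ λ₂ ≥ λ₃ ≥ λ₄ summing to 1, the partial transpose of ρ on the first qubit has minimum eigenvalue 1/2 − λ₁. In particular ρ is PPT if and only if λ₁ ≤ 1/2. -/
open Matrix Kronecker Complex ComplexOrder

noncomputable section

/-- Pauli X -/
def σX : Matrix (Fin 2) (Fin 2) ℂ := !![0, 1; 1, 0]
/-- Pauli Y -/
def σY : Matrix (Fin 2) (Fin 2) ℂ := !![0, -Complex.I; Complex.I, 0]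
/-- Pauli Z -/
def σZ : Matrix (Fin 2) (Fin 2) ℂ := !![1, 0; 0, -1]

/-- sign (-1)^a for a bit -/
def sgn (a : Bool) : ℝ := if a then -1 else 1

/-- three-qubit index type, qubit ordering (C, A, B) -/
abbrev Q3 := Fin 2 × Fin 2 × Fin 2

/-- the operator M_C ⊗ M_A ⊗ M_B on the three qubits ordered C, A, B -/
def op3 (MC MA MB : Matrix (Fin 2) (Fin 2) ℂ) : Matrix Q3 Q3 ℂ :=
  fun i j => MC i.1 j.1 * MA i.2.1 j.2.1 * MB i.2.2 j.2.2

/-- tensor product N_C ⊗ M_{AB} of a one-qubit operator (on C) with a two-qubit operator (on A,B) -/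
def tensC_AB (N : Matrix (Fin 2) (Fin 2) ℂ)
    (M : Matrix (Fin 2 × Fin 2) (Fin 2 × Fin 2) ℂ) : Matrix Q3 Q3 ℂ :=
  fun i j => N i.1 j.1 * M i.2 j.2

/-- partial transpose over qubit C -/
def ptC (M : Matrix Q3 Q3 ℂ) : Matrix Q3 Q3 ℂ := fun i j => M (j.1, i.2) (i.1, j.2)
/-- partial transpose over qubit A -/
def ptA (M : Matrix Q3 Q3 ℂ) : Matrix Q3 Q3 ℂ :=
  fun i j => M (i.1, (j.2.1, i.2.2)) (j.1, (i.2.1, j.2.2))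
/-- partial transpose over qubit B -/
def ptB (M : Matrix Q3 Q3 ℂ) : Matrix Q3 Q3 ℂ :=
  fun i j => M (i.1, (i.2.1, j.2.2)) (j.1, (j.2.1, i.2.2))

/-- partial transpose over the first qubit of a two-qubit operator -/
def pt1 (M : Matrix (Fin 2 × Fin 2) (Fin 2 × Fin 2) ℂ) : Matrix (Fin 2 × Fin 2) (Fin 2 × Fin 2) ℂ :=
  fun i j => M (j.1, i.2) (i.1, j.2)
/-- partial transpose over the second qubit of a two-qubit operator -/
def pt2 (M : Matrix (Fin 2 × Fin 2) (Fin 2 × Fin 2) ℂ) : Matrix (Fin 2 × Fin 2) (Fin 2 × Fin 2) ℂ :=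
  fun i j => M (i.1, j.2) (j.1, i.2)

/-- Bell-diagonal two-qubit operator (1/4)(I + s01 X⊗X + s10 Z⊗Z + s11 Y⊗Y) -/
def bellDiag (s01 s10 s11 : ℝ) : Matrix (Fin 2 × Fin 2) (Fin 2 × Fin 2) ℂ :=
  (1/4 : ℂ) • (1 + (s01 : ℂ) • (σX ⊗ₖ σX) + (s10 : ℂ) • (σZ ⊗ₖ σZ) + (s11 : ℂ) • (σY ⊗ₖ σY))

/-- single-qubit state (1/2)(I + s X) -/
def rhoC (s : ℝ) : Matrix (Fin 2) (Fin 2) ℂ := (1/2 : ℂ) • (1 + (s : ℂ) • σX)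

/-- controlled-phase gate between qubits C and A inside the three-qubit space -/
def CZCA : Matrix Q3 Q3 ℂ :=
  fun i j => if i = j then (if i.1 = 1 ∧ i.2.1 = 1 then -1 else 1) else 0
/-- controlled-phase gate between qubits A and B inside the three-qubit space -/
def CZAB : Matrix Q3 Q3 ℂ :=
  fun i j => if i = j then (if i.2.1 = 1 ∧ i.2.2 = 1 then -1 else 1) else 0

/-- lift of a two-qubit operator on (C,A) to the three-qubit space (identity on B) -/
def liftCA (V : Matrix (Fin 2 × Fin 2) (Fin 2 × Fin 2) ℂ) : Matrix Q3 Q3 ℂ :=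
  fun i j => V (i.1, i.2.1) (j.1, j.2.1) * (if i.2.2 = j.2.2 then 1 else 0)

/-- the state ρ_ABC = CZ_{AC} (ρ_C ⊗ ρ_AB) CZ_{AC} of the EDSS protocol -/
def rhoABC (s01 s10 s11 s : ℝ) : Matrix Q3 Q3 ℂ :=
  CZCA * tensC_AB (rhoC s) (bellDiag s01 s10 s11) * CZCA

/-- stabilizer K_C = X_C Z_A of the path graph C–A–B -/
def KC : Matrix Q3 Q3 ℂ := op3 σX σZ 1
/-- stabilizer K_A = Z_C X_A Z_B of the path graph C–A–B -/
def KA : Matrix Q3 Q3 ℂ := op3 σZ σX σZ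
/-- stabilizer K_B = Z_A X_B of the path graph C–A–B -/
def KB : Matrix Q3 Q3 ℂ := op3 1 σZ σX

/-- the vector |+⟩⊗|+⟩⊗|+⟩ -/
def plus3 : Q3 → ℂ := fun _ => ((1 : ℂ) / Real.sqrt 2) ^ 3

/-- the graph state of the three-vertex path C–A–B -/
def ψG : Q3 → ℂ := (CZCA * CZAB).mulVec plus3

/-- Z_x : product of Pauli-Z on the qubits indicated by the bit string x = (x_C, x_A, x_B) -/
def Zop (x : Bool × Bool × Bool) : Matrix Q3 Q3 ℂ :=
  op3 (if x.1 then σZ else 1) (if x.2.1 then σZ else 1) (if x.2.2 then σZ else 1)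

/-- the graph-state basis vector Z_x |ψ⟩ -/
def grState (x : Bool × Bool × Bool) : Q3 → ℂ := (Zop x).mulVec ψG

/-- K_x : product of the stabilizers indicated by the bit string x = (x_C, x_A, x_B) -/
def Kx (x : Bool × Bool × Bool) : Matrix Q3 Q3 ℂ :=
  (if x.1 then KC else 1) * (if x.2.1 then KA else 1) * (if x.2.2 then KB else 1)


/-! The Bell basis diagonalises every Bell-diagonal operator: the Bell state with `X⊗X`-eigenvalue
`(-1)^p` and `Z⊗Z`-eigenvalue `(-1)^q` has `Y⊗Y`-eigenvalue `-(-1)^(p+q)`. Transposing the first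
qubit fixes `X` and `Z` and negates `Y`, i.e. replaces `s₁₁` by `-s₁₁`, and this turns the eigenvalue
at `(p, q)` into `1/2` minus the eigenvalue at `(p+1, q+1)`. So the spectrum of the partial
transpose is `{1/2 - λᵢ}`, whose least element is `1/2 - λ₁`. -/

/-- Column `(p, q)` is the Bell state with `X⊗X`-eigenvalue `(-1)^p` and `Z⊗Z`-eigenvalue `(-1)^q`. -/
def bellBasis : Matrix (Fin 2 × Fin 2) (Fin 2 × Fin 2) ℂ :=
  of fun i k => if i.1 + i.2 = k.2 then (-1) ^ ((k.1 * i.1 : Fin 2) : ℕ) / (√2 : ℝ) else 0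

def bellEigenvalues (a b c : ℝ) (k : Fin 2 × Fin 2) : ℝ :=
  (1 + (-1) ^ (k.1 : ℕ) * a + (-1) ^ (k.2 : ℕ) * b - (-1) ^ (k.1 : ℕ) * (-1) ^ (k.2 : ℕ) * c) / 4

lemma inv_sqrt_two_sq : (((√2 : ℝ) : ℂ)⁻¹) ^ 2 = 1 / 2 := by
  rw [inv_pow, ← ofReal_pow, Real.sq_sqrt zero_le_two, ofReal_ofNat, one_div]

lemma bellBasis_mem_unitary : bellBasis ∈ unitary (Matrix (Fin 2 × Fin 2) (Fin 2 × Fin 2) ℂ) := by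
  rw [mem_unitaryGroup_iff]
  ext ⟨i1, i2⟩ ⟨j1, j2⟩
  fin_cases i1 <;> fin_cases i2 <;> fin_cases j1 <;> fin_cases j2 <;>
    simp [bellBasis, mul_apply, Fintype.sum_prod_type, one_apply] <;> ring_nf <;>
    simp only [inv_sqrt_two_sq] <;> norm_num

section

variable (a b c : ℝ)

lemma bellDiag_eq_bellBasis_mul_diagonal_mul_star : bellDiag a b c =
    bellBasis * diagonal (fun k => (bellEigenvalues a b c k : ℂ)) * star bellBasis := by
  ext ⟨i1, i2⟩ ⟨j1, j2⟩
  fin_cases i1 <;> fin_cases i2 <;> fin_cases j1 <;> fin_cases j2 <;>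
    simp [bellDiag, bellBasis, bellEigenvalues, σX, σY, σZ, mul_apply, Fintype.sum_prod_type,
      one_apply] <;> ring_nf <;> simp only [inv_sqrt_two_sq] <;> ring

lemma spectrum_bellDiag :
    spectrum ℂ (bellDiag a b c) = Set.range (fun k => (bellEigenvalues a b c k : ℂ)) := by
  rw [bellDiag_eq_bellBasis_mul_diagonal_mul_star, ← spectrum_diagonal]
  exact Unitary.spectrum_star_right_conjugate (U := ⟨bellBasis, bellBasis_mem_unitary⟩)

lemma real_spectrum_bellDiag :
    {r : ℝ | (r : ℂ) ∈ spectrum ℂ (bellDiag a b c)} = Set.range (bellEigenvalues a b c) := by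
  ext r
  simp [spectrum_bellDiag]

lemma bellDiag_posSemidef_iff :
    (bellDiag a b c).PosSemidef ↔ 0 ∈ lowerBounds (Set.range (bellEigenvalues a b c)) := by
  rw [bellDiag_eq_bellBasis_mul_diagonal_mul_star,
    (Unitary.isUnit_coe (U := ⟨bellBasis, bellBasis_mem_unitary⟩)).posSemidef_star_right_conjugate_iff,
    posSemidef_diagonal_iff, mem_lowerBounds, Set.forall_mem_range]
  simp

lemma pt1_bellDiag : pt1 (bellDiag a b c) = bellDiag a b (-c) := by
  ext ⟨i1, i2⟩ ⟨j1, j2⟩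
  fin_cases i1 <;> fin_cases i2 <;> fin_cases j1 <;> fin_cases j2 <;>
    simp [pt1, bellDiag, σX, σY, σZ, one_apply]

lemma bellEigenvalues_neg (k : Fin 2 × Fin 2) :
    bellEigenvalues a b (-c) k = 1 / 2 - bellEigenvalues a b c (k.1 + 1, k.2 + 1) := by
  obtain ⟨p, q⟩ := k
  fin_cases p <;> fin_cases q <;> simp [bellEigenvalues] <;> ring

lemma range_bellEigenvalues_neg :
    Set.range (bellEigenvalues a b (-c)) = (1 / 2 - ·) '' Set.range (bellEigenvalues a b c) := by
  rw [← Set.range_comp, ← (Equiv.addRight (1, 1)).surjective.range_comp]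
  ext
  simp [bellEigenvalues_neg]

lemma range_bellEigenvalues :
    Set.range (bellEigenvalues a b c) =
      {(1 + a - b + c) / 4, (1 - a + b + c) / 4, (1 + a + b - c) / 4, (1 - a - b - c) / 4} := by
  ext x
  simp only [Set.mem_range, Prod.exists, Fin.exists_fin_two, bellEigenvalues]
  norm_num [← sub_eq_add_neg, eq_comm]
  tauto

end

theorem stmt3_general (s01 s10 s11 : ℝ) (l1 l2 l3 l4 : ℝ)
    (hset : ({l1, l2, l3, l4} : Multiset ℝ) =
      {(1 + s01 - s10 + s11) / 4, (1 - s01 + s10 + s11) / 4,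
       (1 + s01 + s10 - s11) / 4, (1 - s01 - s10 - s11) / 4})
    (h12 : l2 ≤ l1) (h23 : l3 ≤ l2) (h34 : l4 ≤ l3) :
    IsLeast {r : ℝ | (r : ℂ) ∈ spectrum ℂ (pt1 (bellDiag s01 s10 s11))} (1 / 2 - l1) ∧
    ((pt1 (bellDiag s01 s10 s11)).PosSemidef ↔ l1 ≤ 1 / 2) := by
  have hspec : Set.range (bellEigenvalues s01 s10 (-s11)) = (1 / 2 - ·) '' {l1, l2, l3, l4} := by
    rw [range_bellEigenvalues_neg, range_bellEigenvalues]
    congr 1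
    ext x
    simpa using congrArg (x ∈ ·) hset.symm
  have hleast : IsLeast ((1 / 2 - ·) '' {l1, l2, l3, l4}) (1 / 2 - l1) := by
    refine ⟨by simp, ?_⟩
    rintro _ ⟨l, hl, rfl⟩
    rcases hl with rfl | rfl | rfl | rfl <;> simp only [sub_le_sub_iff_left] <;> linarith
  rw [pt1_bellDiag, real_spectrum_bellDiag, bellDiag_posSemidef_iff, hspec, hleast.lowerBounds_eq,
    Set.mem_Iic, sub_nonneg]
  exact ⟨hleast, Iff.rfl⟩

/-- the partial transpose on the first qubit of a Bell-diagonal state with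
ordered eigenvalues l1 ≥ l2 ≥ l3 ≥ l4 has minimum eigenvalue 1/2 − l1; PPT iff l1 ≤ 1/2. -/
theorem stmt3 (s01 s10 s11 : ℝ) (l1 l2 l3 l4 : ℝ)
    (hρ : (bellDiag s01 s10 s11).PosSemidef)
    (hset : ({l1, l2, l3, l4} : Multiset ℝ) =
      {(1 + s01 - s10 + s11) / 4, (1 - s01 + s10 + s11) / 4,
       (1 + s01 + s10 - s11) / 4, (1 - s01 - s10 - s11) / 4})
    (h12 : l2 ≤ l1) (h23 : l3 ≤ l2) (h34 : l4 ≤ l3) :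
    IsLeast {r : ℝ | (r : ℂ) ∈ spectrum ℂ (pt1 (bellDiag s01 s10 s11))} (1 / 2 - l1) ∧
    ((pt1 (bellDiag s01 s10 s11)).PosSemidef ↔ l1 ≤ 1 / 2) :=
  stmt3_general s01 s10 s11 l1 l2 l3 l4 hset h12 h23 h34
end
end

section
/- Let ρ_AB = (1/4)(I + s₀₁ X_A X_B + s₁₀ Z_A Z_B) (i.e. s₁₁ = 0) be a two-qubit Bell-diagonal state, ρ_C = (1/2)(I + sX) a single-qubit state with |s| ≤ 1, and U any unitary acting on qubits A and C. Set ρ_ABC = U (ρ_AB ⊗ ρ_C) U†. Then the spectrum of the partial transpose of ρ_ABC over qubit C equals the spectrum of the partial transpose of ρ_ABC over qubit A. -/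
open Matrix Kronecker Complex ComplexOrder

noncomputable section

lemma charpoly_transpose' {n R : Type*} [DecidableEq n] [Fintype n] [CommRing R]
    (M : Matrix n n R) : Mᵀ.charpoly = M.charpoly := by
  have h : Matrix.charmatrix Mᵀ = (Matrix.charmatrix M)ᵀ := by
    ext i j
    by_cases hij : i = j <;> simp [hij, Matrix.transpose_apply, Matrix.charmatrix_apply,
      Matrix.diagonal_apply, eq_comm]
  rw [Matrix.charpoly, Matrix.charpoly, h, Matrix.det_transpose]

lemma ptC_transpose (M : Matrix Q3 Q3 ℂ) : (ptC M)ᵀ = ptA (ptB M) := rfl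

lemma ptB_tens (N : Matrix (Fin 2) (Fin 2) ℂ) (P : Matrix (Fin 2 × Fin 2) (Fin 2 × Fin 2) ℂ) :
    ptB (tensC_AB N P) = tensC_AB N (pt2 P) := rfl

lemma liftCA_conjTranspose (V : Matrix (Fin 2 × Fin 2) (Fin 2 × Fin 2) ℂ) :
    (liftCA V)ᴴ = liftCA Vᴴ := by
  ext i j
  simp only [liftCA, Matrix.conjTranspose_apply]
  by_cases h : i.2.2 = j.2.2
  · simp only [liftCA, if_pos h, if_pos h.symm, mul_one, _root_.map_mul, _root_.map_one,
      Matrix.conjTranspose_apply]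
  · have h' : ¬ j.2.2 = i.2.2 := fun hh => h hh.symm
    simp [liftCA, h, h']

lemma ptB_conj (A B : Matrix (Fin 2 × Fin 2) (Fin 2 × Fin 2) ℂ) (Y : Matrix Q3 Q3 ℂ) :
    ptB (liftCA A * Y * liftCA B) = liftCA A * ptB Y * liftCA B := by
  ext ⟨i1, i21, i22⟩ ⟨j1, j21, j22⟩
  simp only [ptB, Matrix.mul_apply, liftCA, Fintype.sum_prod_type, Fin.sum_univ_two]
  fin_cases i22 <;> fin_cases j22 <;> simp

lemma pt2_bellDiag (s01 s10 : ℝ) : pt2 (bellDiag s01 s10 0) = bellDiag s01 s10 0 := by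
  ext ⟨i1, i2⟩ ⟨j1, j2⟩
  fin_cases i1 <;> fin_cases i2 <;> fin_cases j1 <;> fin_cases j2 <;>
    simp [pt2, bellDiag, σX, σZ, σY, Matrix.kroneckerMap_apply, Matrix.one_apply,
      Prod.ext_iff]

/-- with s11 = 0, for any unitary U on qubits A and C, the spectrum (as a
multiset, encoded by the characteristic polynomial) of the partial transpose of
ρ_ABC = U(ρ_AB ⊗ ρ_C)U† over qubit C equals that of the partial transpose over qubit A. -/
theorem stmt4 (s01 s10 s : ℝ) (hs : |s| ≤ 1)
    (V : Matrix (Fin 2 × Fin 2) (Fin 2 × Fin 2) ℂ)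
    (hV : V ∈ Matrix.unitaryGroup (Fin 2 × Fin 2) ℂ) :
    (ptC (liftCA V * tensC_AB (rhoC s) (bellDiag s01 s10 0) * (liftCA V)ᴴ)).charpoly =
    (ptA (liftCA V * tensC_AB (rhoC s) (bellDiag s01 s10 0) * (liftCA V)ᴴ)).charpoly := by
  set M := liftCA V * tensC_AB (rhoC s) (bellDiag s01 s10 0) * (liftCA V)ᴴ with hM
  have hB : ptB M = M := by
    rw [hM, liftCA_conjTranspose, ptB_conj, ptB_tens, pt2_bellDiag]
  calc (ptC M).charpoly = ((ptC M)ᵀ).charpoly := (charpoly_transpose' _).symm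
    _ = (ptA (ptB M)).charpoly := by rw [ptC_transpose]
    _ = (ptA M).charpoly := by rw [hB]
end
end

section
/- Each of the 2×2-block operators of the form α Z_A X_B + Z_C(β X_A Z_B + γ Y_A Y_B) + δ I appearing in the separability decomposition is, when positive semidefinite, separable across C | AB; in particular, s₁₁ Z_A X_B + Z_C(s₁₀ X_A Z_B + s₁₁ Y_A Y_B) + s₁₀ I is a nonnegative combination of products σ_C ⊗ σ_{AB} with σ_C, σ_{AB} positive semidefinite, whenever it is positive semidefinite. -/
open Matrix Kronecker Complex ComplexOrder

noncomputable section

/-- expressibility as a nonnegative combination of products σ_C ⊗ σ_AB of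
positive-semidefinite operators (separability across C | AB, unnormalised). -/
def SepCABw (M : Matrix Q3 Q3 ℂ) : Prop :=
  ∃ (n : ℕ) (p : Fin n → ℝ) (σC : Fin n → Matrix (Fin 2) (Fin 2) ℂ)
    (σAB : Fin n → Matrix (Fin 2 × Fin 2) (Fin 2 × Fin 2) ℂ),
    (∀ k, 0 ≤ p k) ∧ (∀ k, (σC k).PosSemidef ∧ (σAB k).PosSemidef) ∧
    M = ∑ k, ((p k : ℝ) : ℂ) • tensC_AB (σC k) (σAB k)


lemma diag_psd (a b : ℝ) (ha : 0 ≤ a) (hb : 0 ≤ b) :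
    (Matrix.diagonal ![(a:ℂ), b]).PosSemidef := by
  rw [Matrix.posSemidef_diagonal_iff]
  intro i
  fin_cases i <;> simpa using by exact_mod_cast ‹_›

lemma sepCAB_of_psd (α β γ δ : ℝ)
    (h : ((α : ℂ) • op3 1 σZ σX + (β : ℂ) • op3 σZ σX σZ + (γ : ℂ) • op3 σZ σY σY
        + (δ : ℂ) • (1 : Matrix Q3 Q3 ℂ)).PosSemidef) :
    SepCABw ((α : ℂ) • op3 1 σZ σX + (β : ℂ) • op3 σZ σX σZ + (γ : ℂ) • op3 σZ σY σY
        + (δ : ℂ) • (1 : Matrix Q3 Q3 ℂ)) := by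
  set M := (α : ℂ) • op3 1 σZ σX + (β : ℂ) • op3 σZ σX σZ + (γ : ℂ) • op3 σZ σY σY
        + (δ : ℂ) • (1 : Matrix Q3 Q3 ℂ) with hM
  refine ⟨2, ![1, 1],
    ![Matrix.diagonal ![1, 0], Matrix.diagonal ![0, 1]],
    ![M.submatrix (fun p => ((0, p) : Q3)) (fun p => ((0, p) : Q3)),
      M.submatrix (fun p => ((1, p) : Q3)) (fun p => ((1, p) : Q3))], ?_, ?_, ?_⟩
  · intro k; fin_cases k <;> norm_num
  · intro k; fin_cases k
    · exact ⟨by simpa using diag_psd 1 0 zero_le_one le_rfl, h.submatrix _⟩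
    · exact ⟨by simpa using diag_psd 0 1 le_rfl zero_le_one, h.submatrix _⟩
  · ext ⟨i1, i2, i3⟩ ⟨j1, j2, j3⟩
    simp only [Fin.sum_univ_two, Matrix.add_apply, Matrix.smul_apply, Matrix.cons_val_zero,
      Matrix.cons_val_one, Matrix.head_cons, tensC_AB, Matrix.submatrix_apply]
    fin_cases i1 <;> fin_cases j1 <;>
      simp [hM, op3, σX, σY, σZ, Matrix.one_apply, Matrix.diagonal_apply, tensC_AB,
        Matrix.add_apply, Matrix.smul_apply, smul_eq_mul] <;> ring

/-- every operator α Z_A X_B + Z_C(β X_A Z_B + γ Y_A Y_B) + δ I that is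
positive semidefinite is separable across C | AB; in particular this holds for
s11 Z_A X_B + Z_C(s10 X_A Z_B + s11 Y_A Y_B) + s10 I with s10, s11 ≥ 0. -/
theorem stmt14 (s10 s11 : ℝ) (h10 : 0 ≤ s10) (h11 : 0 ≤ s11) :
    (∀ α β γ δ : ℝ,
      ((α : ℂ) • op3 1 σZ σX + (β : ℂ) • op3 σZ σX σZ + (γ : ℂ) • op3 σZ σY σY
        + (δ : ℂ) • (1 : Matrix Q3 Q3 ℂ)).PosSemidef →
      SepCABw ((α : ℂ) • op3 1 σZ σX + (β : ℂ) • op3 σZ σX σZ + (γ : ℂ) • op3 σZ σY σY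
        + (δ : ℂ) • (1 : Matrix Q3 Q3 ℂ))) ∧
    (((s11 : ℂ) • op3 1 σZ σX + (s10 : ℂ) • op3 σZ σX σZ + (s11 : ℂ) • op3 σZ σY σY
        + (s10 : ℂ) • (1 : Matrix Q3 Q3 ℂ)).PosSemidef →
      SepCABw ((s11 : ℂ) • op3 1 σZ σX + (s10 : ℂ) • op3 σZ σX σZ + (s11 : ℂ) • op3 σZ σY σY
        + (s10 : ℂ) • (1 : Matrix Q3 Q3 ℂ))) := by
  constructor
  · exact fun α β γ δ h => sepCAB_of_psd α β γ δ h
  · exact fun h => sepCAB_of_psd s11 s10 s11 s10 h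
end
end
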